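/- Let step (a, b) = (Nat.xor a b, 2 * Nat.land a b) and let T(a, b) be the least k such that the second component of step^[k] (a, b) is zero. Then T(a, b) exists (the loop always terminates) and T(a, b) ≤ (number of bits of a + b) , i.e., T(a, b) ≤ Nat.size (a + b). -/

import Mathlib

def addStep (p : ℕ × ℕ) : ℕ × ℕ := (p.1 ^^^ p.2, 2 * (p.1 &&& p.2))

/-!
`addStep` is one round of carry-propagating addition: `a ^^^ b` is the sum without carries and
`2 * (a &&& b)` the carries, so the sum of the two components is invariant. The carry is `2`
times an `&&&`, and `&&&` preserves divisibility by powers of two, so after `k` rounds it is a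
multiple of `2 ^ k`. Being at most `a + b < 2 ^ Nat.size (a + b)`, it vanishes after
`Nat.size (a + b)` rounds.
-/

namespace Nat

theorem xor_add_two_mul_and (a b : ℕ) : (a ^^^ b) + 2 * (a &&& b) = a + b := by
  induction a using Nat.binaryRec generalizing b with
  | zero => simp
  | bit x m ih =>
    cases b using Nat.bitCasesOn with
    | bit y n =>
      rw [xor_bit, land_bit, bit_val, bit_val, bit_val, bit_val]
      have := ih n
      cases x <;> cases y <;>
        simp only [bne_self_eq_false, Bool.bne_false, Bool.bne_true, Bool.not_false, Bool.and_self,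
          Bool.and_false, Bool.and_true, Bool.toNat_true, Bool.toNat_false] <;> omega

theorem two_pow_dvd_and_of_dvd_right {n m : ℕ} (x : ℕ) (h : 2 ^ n ∣ m) :
    2 ^ n ∣ x &&& m := by
  rw [dvd_iff_mod_eq_zero, and_mod_two_pow, mod_eq_zero_of_dvd h, and_zero]

end Nat

theorem addStep_fst_add_snd (p : ℕ × ℕ) : (addStep p).1 + (addStep p).2 = p.1 + p.2 :=
  Nat.xor_add_two_mul_and p.1 p.2

theorem iterate_addStep_fst_add_snd (p : ℕ × ℕ) (k : ℕ) :
    (addStep^[k] p).1 + (addStep^[k] p).2 = p.1 + p.2 := by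
  induction k with
  | zero => rfl
  | succ k ih => rw [Function.iterate_succ_apply', addStep_fst_add_snd, ih]

theorem two_pow_dvd_iterate_addStep_snd (p : ℕ × ℕ) (k : ℕ) :
    2 ^ k ∣ (addStep^[k] p).2 := by
  induction k with
  | zero => exact one_dvd _
  | succ k ih =>
    rw [Function.iterate_succ_apply', pow_succ']
    exact mul_dvd_mul_left 2 (Nat.two_pow_dvd_and_of_dvd_right _ ih)

theorem iterate_addStep_snd_eq_zero {p : ℕ × ℕ} {k : ℕ} (h : p.1 + p.2 < 2 ^ k) :
    (addStep^[k] p).2 = 0 := by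
  refine Nat.eq_zero_of_dvd_of_lt (two_pow_dvd_iterate_addStep_snd p k) ?_
  have := iterate_addStep_fst_add_snd p k
  omega

theorem addStep_termination_bound (a b : ℕ) :
    ∃ hk : ∃ k, (addStep^[k] (a, b)).2 = 0, Nat.find hk ≤ Nat.size (a + b) := by
  have hzero : (addStep^[Nat.size (a + b)] (a, b)).2 = 0 :=
    iterate_addStep_snd_eq_zero (Nat.lt_size_self (a + b))
  exact ⟨⟨_, hzero⟩, Nat.find_le hzero⟩
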